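/- Let k ≥ 1 and n ≥ 2k, and let λ = (λ₁,…,λ_n) ∈ Γ_k^+. Then for every vector v = (v₁,…,v_n) ∈ ℝ^n, ((n−k+1)/2) σ_{k−1}(λ) Σ_{i=1}^n v_i² − Σ_{i=1}^n σ_{k−1}(λ|i) v_i² ≥ ((n−2k)(n−k+1)/(2n)) σ_{k−1}(λ) Σ_{i=1}^n v_i². -/

import Mathlib

/-- The k-th elementary symmetric polynomial of `λ = (λ₁,…,λ_n)` (with `σ_0 = 1`). -/
def esym (n : ℕ) (k : ℕ) (lam : Fin n → ℝ) : ℝ :=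
  ∑ s ∈ Finset.powersetCard k (Finset.univ : Finset (Fin n)), ∏ i ∈ s, lam i

/-!
Write `σⱼ(λ) = Tⱼ + λᵢ Tⱼ₋₁` with `Tⱼ = σⱼ(λ|i)`, the elementary symmetric functions of the
`n - 1` numbers `λ|i`. Newton's inequalities
`(j + 2)(m - j) Tⱼ Tⱼ₊₂ ≤ (j + 1)(m - j - 1) Tⱼ₊₁²` (`m = n - 1`) first show, by induction on `j`,
that `λ|i ∈ Γₖ₋₁⁺`. Multiplying `σₖ(λ) = Tₖ + λᵢ Tₖ₋₁ > 0` by `Tₖ₋₂ > 0` and applying Newton once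
more gives `n σₖ₋₁(λ|i) ≤ k (n - k + 1) σₖ₋₁(λ)`, because `k (n - k + 1) - (k - 1)(n - k) = n`.
Summing against `vᵢ²` and using `(n - 2k)(n - k + 1)/(2n) + k (n - k + 1)/n = (n - k + 1)/2` gives
the claim.

Newton's inequalities hold for the coefficients of every real-rooted polynomial such as
`∏ (X + λⱼ)`: splitting over `ℝ` survives differentiation (Rolle) and reversal, and these cut the
polynomial down to a real-rooted quadratic whose discriminant is the inequality.
-/

open Polynomial

namespace Multiset

variable {R : Type*} [CommSemiring R]

theorem esymm_zero (s : Multiset R) : s.esymm 0 = 1 := by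
  simp [esymm, powersetCard_zero_left]

theorem esymm_cons_succ (a : R) (s : Multiset R) (k : ℕ) :
    (a ::ₘ s).esymm (k + 1) = s.esymm (k + 1) + a * s.esymm k := by
  simp only [esymm, powersetCard_cons, map_add, sum_add, map_map, Function.comp_def, prod_cons,
    ← sum_map_mul_left]

theorem esymm_zero_cons (s : Multiset R) (k : ℕ) : (0 ::ₘ s).esymm k = s.esymm k := by
  cases k with
  | zero => rw [esymm_zero, esymm_zero]
  | succ k => rw [esymm_cons_succ, zero_mul, add_zero]

end Multiset

theorem Nat.succ_mul_descFactorial_succ_add (a c : ℕ) :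
    (c + 1) * (c + 1 + a).descFactorial a = (c + 1 + a) * (c + a).descFactorial a := by
  have := Nat.succ_descFactorial (c + a) a
  rwa [show c + a + 1 - a = c + 1 by omega, show c + a + 1 = c + 1 + a by omega] at this

namespace Polynomial

theorem Splits.derivative {p : ℝ[X]} (hp : p.Splits) : p.derivative.Splits := by
  rw [splits_iff_card_roots] at hp ⊢
  have := p.card_roots_le_derivative
  have := p.derivative.card_roots'
  have := p.natDegree_derivative_le
  omega

theorem Splits.iterate_derivative {p : ℝ[X]} (hp : p.Splits) (d : ℕ) :
    (Polynomial.derivative^[d] p).Splits := by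
  induction d with
  | zero => exact hp
  | succ d ih => rw [Function.iterate_succ_apply']; exact ih.derivative

theorem Splits.reverse {K : Type*} [Field K] {p : K[X]} (hp : p.Splits) : p.reverse.Splits := by
  induction hp using Submonoid.closure_induction with
  | mem q hq =>
    obtain ⟨a, rfl⟩ | ⟨a, rfl⟩ := hq
    · rw [reverse_C]; exact Splits.C a
    · rw [reverse_add_C, show (X : K[X]).reverse = C 1 by
        rw [← one_mul X, reverse_mul_X, ← C_1, reverse_C],
        natDegree_X, pow_one, add_comm]
      exact Splits.of_natDegree_le_one natDegree_linear_le
  | one => rw [← C_1, reverse_C]; exact Splits.C 1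
  | mul p q _ _ hp hq => rw [reverse_mul_of_domain]; exact hp.mul hq

theorem Splits.four_mul_coeff_two_mul_coeff_zero_le_sq {K : Type*} [Field K] [LinearOrder K]
    [IsStrictOrderedRing K] {q : K[X]} (hq : q.Splits) (hdeg : q.natDegree ≤ 2) :
    4 * (q.coeff 2 * q.coeff 0) ≤ q.coeff 1 ^ 2 := by
  by_cases h2 : q.coeff 2 = 0
  · rw [h2, zero_mul, mul_zero]; positivity
  have hq2 : q.natDegree = 2 := le_antisymm hdeg (le_natDegree_of_ne_zero h2)
  obtain ⟨x, hx⟩ := hq.exists_eval_eq_zero (by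
    rw [degree_eq_natDegree (fun h ↦ h2 (by simp [h])), hq2]; decide)
  rw [eval_eq_sum_range, hq2] at hx
  simp only [Finset.sum_range_succ, Finset.sum_range_zero, pow_zero, pow_one, mul_one,
    zero_add] at hx
  linear_combination sq_nonneg (2 * q.coeff 2 * x + q.coeff 1) + 4 * q.coeff 2 * hx

theorem Splits.coeff_newton {p : ℝ[X]} (hp : p.Splits) {e : ℕ} (he : e + 2 ≤ p.natDegree) :
    ((e : ℝ) + 2) * (p.natDegree - e) * (p.coeff e * p.coeff (e + 2)) ≤
      ((e : ℝ) + 1) * (p.natDegree - e - 1) * p.coeff (e + 1) ^ 2 := by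
  obtain ⟨j, hj⟩ : ∃ j, p.natDegree = e + 2 + j := ⟨p.natDegree - (e + 2), by omega⟩
  have hlead : p.coeff (e + 2 + j) ≠ 0 := by
    rw [← hj]
    exact leadingCoeff_ne_zero.mpr (ne_zero_of_natDegree_gt (n := 0) (by omega))
  -- `r = D^e p` and `q = D^j (reverse r)`
  obtain ⟨r, hrs, hr, hrle⟩ : ∃ r : ℝ[X], r.Splits ∧
      (∀ c, r.coeff c = (c + e).descFactorial e * p.coeff (c + e)) ∧ r.natDegree ≤ j + 2 :=
    ⟨_, hp.iterate_derivative e, fun c ↦ by rw [coeff_iterate_derivative, nsmul_eq_mul],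
      (natDegree_iterate_derivative p e).trans (by omega)⟩
  have hrdeg : r.natDegree = j + 2 := by
    refine le_antisymm hrle (le_natDegree_of_ne_zero ?_)
    rw [hr, show j + 2 + e = e + 2 + j by omega]
    exact mul_ne_zero (by exact_mod_cast (Nat.descFactorial_pos.mpr (by omega)).ne') hlead
  obtain ⟨q, hqs, hqle, hq⟩ : ∃ q : ℝ[X], q.Splits ∧ q.natDegree ≤ 2 ∧ ∀ c ≤ 2,
      q.coeff c = (c + j).descFactorial j * ((2 - c + e).descFactorial e * p.coeff (2 - c + e)) :=
    ⟨_, hrs.reverse.iterate_derivative j,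
      (natDegree_iterate_derivative _ j).trans (by have := r.reverse_natDegree_le; omega),
      fun c hc ↦ by rw [coeff_iterate_derivative, nsmul_eq_mul, coeff_reverse, hrdeg,
        revAt_le (by omega), hr, show j + 2 - (c + j) = 2 - c by omega]⟩
  have hdisc := hqs.four_mul_coeff_two_mul_coeff_zero_le_sq hqle
  rw [hq 2 le_rfl, hq 1 (by norm_num), hq 0 (by norm_num)] at hdisc
  have hj1 := congrArg (Nat.cast : ℕ → ℝ) (Nat.succ_mul_descFactorial_succ_add j 0)
  have hj2 := congrArg (Nat.cast : ℕ → ℝ) (Nat.succ_mul_descFactorial_succ_add j 1)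
  have he1 := congrArg (Nat.cast : ℕ → ℝ) (Nat.succ_mul_descFactorial_succ_add e 0)
  have he2 := congrArg (Nat.cast : ℕ → ℝ) (Nat.succ_mul_descFactorial_succ_add e 1)
  norm_num at hdisc hj1 hj2 he1 he2
  rw [hj1] at hj2
  rw [he1] at he2
  rw [show ((2 + j).descFactorial j : ℝ) = (2 + j) * (1 + j) * j.descFactorial j / 2 by
      linear_combination hj2 / 2,
    show ((2 + e).descFactorial e : ℝ) = (2 + e) * (1 + e) * e.descFactorial e / 2 by
      linear_combination he2 / 2, hj1, he1, add_comm 2 e, add_comm 1 e] at hdisc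
  have hF : (0 : ℝ) < j.descFactorial j := by exact_mod_cast Nat.descFactorial_pos.mpr le_rfl
  have hG : (0 : ℝ) < e.descFactorial e := by exact_mod_cast Nat.descFactorial_pos.mpr le_rfl
  refine le_of_mul_le_mul_left ?_
    (by positivity : (0 : ℝ) < (j + 1) * (e + 1) * j.descFactorial j ^ 2 * e.descFactorial e ^ 2)
  rw [hj]
  push_cast
  linear_combination hdisc

end Polynomial

namespace Multiset

theorem esymm_newton (s : Multiset ℝ) {k : ℕ} (hk : k + 2 ≤ card s) :
    ((k : ℝ) + 2) * (card s - k) * (s.esymm k * s.esymm (k + 2)) ≤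
      ((k : ℝ) + 1) * (card s - k - 1) * s.esymm (k + 1) ^ 2 := by
  have hdeg : (s.map (X + C ·)).prod.natDegree = card s := by
    rw [natDegree_multiset_prod_of_monic _ (by simp [monic_X_add_C])]
    simp
  have hnewton := (Splits.multisetProd (by simp [Splits.X_add_C])).coeff_newton
    (p := (s.map (X + C ·)).prod) (e := card s - (k + 2)) (by omega)
  rw [hdeg, prod_X_add_C_coeff s (by omega), prod_X_add_C_coeff s (by omega),
    prod_X_add_C_coeff s (by omega), show card s - (card s - (k + 2)) = k + 2 by omega,
    show card s - (card s - (k + 2) + 1) = k + 1 by omega,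
    show card s - (card s - (k + 2) + 2) = k by omega, Nat.cast_sub hk] at hnewton
  push_cast at hnewton
  linear_combination hnewton

theorem esymm_mul_esymm_le_sq (s : Multiset ℝ) {k : ℕ} (hk : k + 2 ≤ card s) :
    s.esymm k * s.esymm (k + 2) ≤ s.esymm (k + 1) ^ 2 := by
  have hnewton := s.esymm_newton hk
  have hm : (k : ℝ) + 2 ≤ card s := by exact_mod_cast hk
  rcases le_or_gt (s.esymm k * s.esymm (k + 2)) 0 with hneg | hpos
  · exact hneg.trans (sq_nonneg _)
  · have hc : (0 : ℝ) ≤ ((k : ℝ) + 1) * (card s - k - 1) := by nlinarith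
    by_contra! hlt
    nlinarith [mul_le_mul_of_nonneg_left hlt.le hc]

theorem esymm_pos_of_esymm_cons_pos {a : ℝ} {s : Multiset ℝ} {k : ℕ} (hk : k ≤ card s)
    (h : ∀ j, 1 ≤ j → j ≤ k → 0 < (a ::ₘ s).esymm j) : ∀ j < k, 0 < s.esymm j := by
  intro j hj
  induction j with
  | zero => rw [esymm_zero]; exact one_pos
  | succ j ih =>
    have hT0 := ih (by omega)
    by_contra! hT1
    have h1 := h (j + 1) (by omega) (by omega)
    have h2 := h (j + 2) (by omega) (by omega)
    rw [esymm_cons_succ] at h1 h2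
    have hnewton := s.esymm_mul_esymm_le_sq (k := j) (by omega)
    nlinarith [mul_pos hT0 h2, mul_nonneg (neg_nonneg.mpr hT1) h1.le]

theorem card_add_one_mul_esymm_le {a : ℝ} {s : Multiset ℝ} {j : ℕ} (hj : j + 2 ≤ card s)
    (hT0 : 0 < s.esymm j) (hT1 : 0 < s.esymm (j + 1)) (h2 : 0 < (a ::ₘ s).esymm (j + 2)) :
    ((card s : ℝ) + 1) * s.esymm (j + 1) ≤
      ((j : ℝ) + 2) * (card s - j) * (a ::ₘ s).esymm (j + 1) := by
  rw [esymm_cons_succ] at h2 ⊢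
  have hnewton := s.esymm_newton hj
  have hc : (0 : ℝ) < ((j : ℝ) + 2) * (card s - j) := by
    have : (j : ℝ) + 2 ≤ card s := by exact_mod_cast hj
    nlinarith
  refine le_of_mul_le_mul_right ?_ hT1
  nlinarith [mul_pos (mul_pos hc hT0) h2]

end Multiset

theorem esym_eq_esymm_cons (n k : ℕ) (lam : Fin n → ℝ) (i : Fin n) :
    esym n k lam = (lam i ::ₘ (Finset.univ.erase i).val.map lam).esymm k := by
  rw [esym, ← Finset.esymm_map_val, ← Multiset.map_cons, Finset.erase_val,
    Multiset.cons_erase (Finset.mem_univ i)]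

theorem esym_update_zero (n k : ℕ) (lam : Fin n → ℝ) (i : Fin n) :
    esym n k (Function.update lam i 0) = ((Finset.univ.erase i).val.map lam).esymm k := by
  rw [esym_eq_esymm_cons n k _ i, Function.update_self, Multiset.esymm_zero_cons]
  congr 1
  exact Multiset.map_congr rfl fun x hx ↦
    Function.update_of_ne (Finset.ne_of_mem_erase (Finset.mem_def.mpr hx)) 0 lam

theorem esym_update_zero_le (n k : ℕ) (hk : 1 ≤ k) (hn : 2 * k ≤ n) (lam : Fin n → ℝ)
    (hG : ∀ j : ℕ, 1 ≤ j → j ≤ k → 0 < esym n j lam) (i : Fin n) :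
    (n : ℝ) * esym n (k - 1) (Function.update lam i 0) ≤
      k * ((n : ℝ) - k + 1) * esym n (k - 1) lam := by
  set s := (Finset.univ.erase i).val.map lam
  have hcard : Multiset.card s = n - 1 := by simp [s]
  simp only [esym_eq_esymm_cons n _ lam i, esym_update_zero] at hG ⊢
  obtain rfl | ⟨j, rfl⟩ : k = 1 ∨ ∃ j, k = j + 2 := by
    rcases k with _ | _ | j <;> simp_all
  · simp [Multiset.esymm_zero]
  have hpos := Multiset.esymm_pos_of_esymm_cons_pos (by rw [hcard]; omega) hG
  have := Multiset.card_add_one_mul_esymm_le (a := lam i) (s := s) (j := j) (by rw [hcard]; omega)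
    (hpos j (by omega)) (hpos (j + 1) (by omega)) (hG (j + 2) (by omega) le_rfl)
  rw [hcard, Nat.cast_sub (by omega)] at this
  push_cast at this ⊢
  linear_combination this

/-- for `λ ∈ Γ_k^+` with `n ≥ 2k`,
`((n−k+1)/2) σ_{k−1}(λ) Σ v_i² − Σ σ_{k−1}(λ|i) v_i²
  ≥ ((n−2k)(n−k+1)/(2n)) σ_{k−1}(λ) Σ v_i²`. -/
theorem key_quadratic_inequality (n k : ℕ) (hk : 1 ≤ k) (hn : 2 * k ≤ n)
    (lam : Fin n → ℝ) (hG : ∀ j : ℕ, 1 ≤ j → j ≤ k → 0 < esym n j lam)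
    (v : Fin n → ℝ) :
    ((n : ℝ) - 2 * k) * ((n : ℝ) - k + 1) / (2 * n) * esym n (k - 1) lam *
        (∑ i : Fin n, (v i) ^ 2) ≤
      ((n : ℝ) - k + 1) / 2 * esym n (k - 1) lam * (∑ i : Fin n, (v i) ^ 2) -
        ∑ i : Fin n, esym n (k - 1) (Function.update lam i 0) * (v i) ^ 2 := by
  have hn0 : (0 : ℝ) < n := by exact_mod_cast (by omega : 0 < n)
  have hsum : ∑ i, esym n (k - 1) (Function.update lam i 0) * v i ^ 2 ≤
      k * ((n : ℝ) - k + 1) / n * esym n (k - 1) lam * ∑ i, v i ^ 2 := by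
    rw [Finset.mul_sum]
    refine Finset.sum_le_sum fun i _ ↦ mul_le_mul_of_nonneg_right ?_ (sq_nonneg _)
    rw [div_mul_eq_mul_div, le_div_iff₀ hn0, mul_comm]
    exact esym_update_zero_le n k hk hn lam hG i
  have hcoeff : ((n : ℝ) - 2 * k) * (n - k + 1) / (2 * n) + k * (n - k + 1) / n =
      (n - k + 1) / 2 := by
    field_simp
    ring
  rw [← hcoeff]
  linarith
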